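/- arXiv:2401.01258 — 2 statements merged into one kernel-verified Lean document; each statement's English description precedes it below -/
import Mathlib

section
/- Suppose $f: \mathbb{R}^d \to \mathbb{R}$ is $L$-smooth, the sequences satisfy $x_{t+1} = x_t - \alpha g_t$, $g_t = g_{t-1} + \tilde{i}_t$ where $\tilde{i}_t$ is a quantized version of the innovation $i_t = \nabla f(x_t) - g_{t-1}$ satisfying $\|i_t - \tilde{i}_t\| \le \gamma R_t$ whenever $\|i_t\| \le R_t$, the range updates as $R_{t+1} = \gamma R_t + \alpha L \|g_t\|$, and $\|\nabla f(x_0)\| \le R_0$ with $g_{-1} = 0$. Then for all $t \ge 0$: (i) $\|i_t\| \le R_t$ (no overflow), and (ii) $\|e_t\| \le \gamma R_t$, where $e_t = \nabla f(x_t) - g_t$. -/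
/-- No overflow and quantization error for AQGD: under `L`-smoothness and the AQGD
recursions, for all `t`, `‖i_t‖ ≤ R_t` and `‖∇f(x_t) - g_t‖ ≤ γ R_t`. -/
theorem aqgd_no_overflow {d : ℕ} (f : EuclideanSpace ℝ (Fin d) → ℝ)
    (f' : EuclideanSpace ℝ (Fin d) → EuclideanSpace ℝ (Fin d))
    (L α γ : ℝ) (hL : 0 < L) (hα : 0 < α) (hγ0 : 0 < γ) (hγ1 : γ < 1)
    (hgrad : ∀ y, HasGradientAt f (f' y) y)
    (hLip : ∀ a b, ‖f' a - f' b‖ ≤ L * ‖a - b‖)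
    (x g iv itld : ℕ → EuclideanSpace ℝ (Fin d)) (Rr : ℕ → ℝ)
    (hx : ∀ t, x (t + 1) = x t - α • g t)
    (hi0 : iv 0 = f' (x 0))
    (hi : ∀ t, iv (t + 1) = f' (x (t + 1)) - g t)
    (hg0 : g 0 = itld 0)
    (hg : ∀ t, g (t + 1) = g t + itld (t + 1))
    (hq : ∀ t, ‖iv t‖ ≤ Rr t → ‖iv t - itld t‖ ≤ γ * Rr t)
    (hR : ∀ t, Rr (t + 1) = γ * Rr t + α * L * ‖g t‖)
    (hR0 : ‖f' (x 0)‖ ≤ Rr 0) :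
    ∀ t, ‖iv t‖ ≤ Rr t ∧ ‖f' (x t) - g t‖ ≤ γ * Rr t := by
  intro t
  induction t with
  | zero =>
      have h1 : ‖iv 0‖ ≤ Rr 0 := by rw [hi0]; exact hR0
      have h2 := hq 0 h1
      refine ⟨h1, ?_⟩
      rw [hg0, ← hi0]; exact h2
  | succ t ih =>
      obtain ⟨_, he⟩ := ih
      have hdiff : ‖f' (x (t + 1)) - f' (x t)‖ ≤ α * L * ‖g t‖ := by
        calc ‖f' (x (t + 1)) - f' (x t)‖ ≤ L * ‖x (t + 1) - x t‖ := hLip _ _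
          _ = α * L * ‖g t‖ := by
              rw [hx t]
              simp [sub_sub_cancel_left, norm_smul, abs_of_pos hα]
              ring
      have h1 : ‖iv (t + 1)‖ ≤ Rr (t + 1) := by
        rw [hi t, hR t]
        calc ‖f' (x (t + 1)) - g t‖
            = ‖(f' (x (t + 1)) - f' (x t)) + (f' (x t) - g t)‖ := by abel_nf
          _ ≤ ‖f' (x (t + 1)) - f' (x t)‖ + ‖f' (x t) - g t‖ := norm_add_le _ _
          _ ≤ α * L * ‖g t‖ + γ * Rr t := add_le_add hdiff he
          _ = γ * Rr t + α * L * ‖g t‖ := by ring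
      refine ⟨h1, ?_⟩
      have h2 := hq (t + 1) h1
      have : f' (x (t + 1)) - g (t + 1) = iv (t + 1) - itld (t + 1) := by
        rw [hi t, hg t]; abel
      rw [this]; exact h2
end

section
/- Let $f: \mathbb{R}^d \to \mathbb{R}$ be $L$-smooth and satisfy the gradient-domination property $\|\nabla f(x)\|^2 \ge 2\mu(f(x) - f(x^*))$ for all $x$, where $x^* \in \arg\min f$. Run AQGD with step-size $\alpha = 1/(6L)$, contraction factor $\gamma$ with $9\gamma^2 \le 1 - \frac{1}{12\kappa}$ where $\kappa = L/\mu$, quantizer satisfying $\|i_t - \tilde{i}_t\| \le \gamma R_t$ when $\|i_t\| \le R_t$, range update $R_{t+1} = \gamma R_t + \alpha L\|g_t\|$, initialization $g_{-1}=0$, $\|\nabla f(x_0)\| \le R_0$. Then for all $t \ge 0$: $f(x_t) - f(x^*) \le (1 - \frac{1}{12\kappa})^t (f(x_0) - f(x^*) + \alpha R_0^2)$. -/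
/-!
The potential `V_t = f(x_t) - f(x*) + α R_t²` contracts by the factor `1 - αμ/2 = 1 - 1/(12κ)`
at every step, as long as the range invariant `‖i_t‖ ≤ R_t` holds. The invariant propagates:
the gradient error `∇f(x_t) - g_t` equals the quantization error `i_t - ĩ_t`, of norm at most
`γ R_t`, and one step moves the gradient by at most `L ‖x_{t+1} - x_t‖ = α L ‖g_t‖`.
For the contraction, the descent lemma bounds `f(x_{t+1})` through `‖∇f(x_t)‖` and
`e_t = ‖∇f(x_t) - g_t‖`; gradient domination turns `‖∇f(x_t)‖²` into `f(x_t) - f(x*)`, and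
`9γ² ≤ 1 - 1/(12κ)` absorbs the error terms `e_t² ≤ γ² R_t²` into `α R_t²`.
-/

open InnerProductSpace

theorem potential_contraction_of_descent {α μ γ L N e G R D D' : ℝ} (hα : 0 ≤ α)
    (hαL : α * L = 1 / 6) (he0 : 0 ≤ e) (hG0 : 0 ≤ G) (he : e ≤ γ * R) (hG : G ≤ N + e)
    (hPL : 2 * μ * D ≤ N ^ 2) (hdesc : D' ≤ D - α * (N ^ 2 - N * e) + L * α ^ 2 / 2 * G ^ 2)
    (hγ : 9 * γ ^ 2 ≤ 1 - α * μ / 2) :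
    D' + α * (γ * R + α * L * G) ^ 2 ≤ (1 - α * μ / 2) * (D + α * R ^ 2) := by
  have hLα : L * α ^ 2 / 2 = α / 12 := by linear_combination α / 2 * hαL
  rw [hLα] at hdesc
  rw [hαL]
  have hG2 : G ^ 2 ≤ 2 * N ^ 2 + 2 * e ^ 2 := by
    nlinarith [pow_le_pow_left₀ hG0 hG 2, sq_nonneg (N - e)]
  have he2 : e ^ 2 ≤ γ ^ 2 * R ^ 2 := by nlinarith [pow_le_pow_left₀ he0 he 2]
  have hsq : (γ * R + 1 / 6 * G) ^ 2 ≤ 3 * γ ^ 2 * R ^ 2 + N ^ 2 / 12 + e ^ 2 / 12 := by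
    nlinarith [sq_nonneg (2 * (γ * R) - 1 / 6 * G)]
  calc D' + α * (γ * R + 1 / 6 * G) ^ 2
      ≤ D - α / 4 * N ^ 2 + 3 * α / 4 * e ^ 2 + 3 * α * γ ^ 2 * R ^ 2 := by
        linarith [mul_le_mul_of_nonneg_left hsq hα, mul_le_mul_of_nonneg_left hG2 hα,
          mul_nonneg hα (sq_nonneg (N - e))]
    _ ≤ D - α * μ / 2 * D + 15 / 4 * γ ^ 2 * (α * R ^ 2) := by
        linarith [mul_le_mul_of_nonneg_left hPL hα, mul_le_mul_of_nonneg_left he2 hα]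
    _ ≤ (1 - α * μ / 2) * (D + α * R ^ 2) := by
        linarith [mul_le_mul_of_nonneg_right hγ (mul_nonneg hα (sq_nonneg R)),
          mul_nonneg (sq_nonneg γ) (mul_nonneg hα (sq_nonneg R))]

section GradientStep

variable {E : Type*} [NormedAddCommGroup E] [InnerProductSpace ℝ E] {f' : E → E} {L : ℝ}

theorem norm_gradient_sub_le_of_step (hLip : ∀ a b, ‖f' a - f' b‖ ≤ L * ‖a - b‖) {x g : E}
    {α γ R : ℝ} (hα : 0 ≤ α) (h : ‖f' x - g‖ ≤ γ * R) :
    ‖f' (x - α • g) - g‖ ≤ γ * R + α * L * ‖g‖ :=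
  calc ‖f' (x - α • g) - g‖ ≤ ‖f' (x - α • g) - f' x‖ + ‖f' x - g‖ :=
        norm_sub_le_norm_sub_add_norm_sub _ _ _
    _ ≤ L * ‖x - α • g - x‖ + γ * R := add_le_add (hLip _ _) h
    _ = γ * R + α * L * ‖g‖ := by
      rw [sub_sub_cancel_left, norm_neg, norm_smul, Real.norm_eq_abs, abs_of_nonneg hα]; ring

variable [CompleteSpace E] {f : E → ℝ}

theorem le_add_inner_add_sq_of_lipschitz_gradient (hgrad : ∀ y, HasGradientAt f (f' y) y)
    (hLip : ∀ a b, ‖f' a - f' b‖ ≤ L * ‖a - b‖) (a v : E) :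
    f (a + v) ≤ f a + ⟪f' a, v⟫_ℝ + L / 2 * ‖v‖ ^ 2 := by
  set φ : ℝ → ℝ := fun s => f (a + s • v) - s * ⟪f' a, v⟫_ℝ - L / 2 * s ^ 2 * ‖v‖ ^ 2
  have hφ : ∀ s : ℝ, HasDerivAt φ (⟪f' (a + s • v) - f' a, v⟫_ℝ - L * s * ‖v‖ ^ 2) s := by
    intro s
    have hline : HasDerivAt (fun s : ℝ => a + s • v) v s := by
      simpa using ((hasDerivAt_id s).smul_const v).const_add a
    have hf : HasDerivAt (fun s : ℝ => f (a + s • v)) ⟪f' (a + s • v), v⟫_ℝ s := by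
      simpa [toDual_apply_apply, Function.comp_def] using
        (hgrad (a + s • v)).hasFDerivAt.comp_hasDerivAt s hline
    refine ((hf.sub ((hasDerivAt_id s).mul_const ⟪f' a, v⟫_ℝ)).sub
      (((hasDerivAt_pow 2 s).const_mul (L / 2)).mul_const (‖v‖ ^ 2))).congr_deriv ?_
    rw [inner_sub_left]
    norm_num only [Nat.cast_ofNat, pow_one]
    ring
  have hφ_nonpos : ∀ s ∈ interior (Set.Icc (0 : ℝ) 1), deriv φ s ≤ 0 := by
    intro s hs
    rw [interior_Icc] at hs
    rw [(hφ s).deriv]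
    have hmove : ‖f' (a + s • v) - f' a‖ ≤ L * (s * ‖v‖) := by
      simpa [norm_smul, abs_of_pos hs.1] using hLip (a + s • v) a
    nlinarith [real_inner_le_norm (f' (a + s • v) - f' a) v, norm_nonneg v]
  have hanti : AntitoneOn φ (Set.Icc 0 1) :=
    antitoneOn_of_deriv_nonpos (convex_Icc 0 1)
      (fun s _ => (hφ s).continuousAt.continuousWithinAt)
      (fun s _ => (hφ s).differentiableAt.differentiableWithinAt) hφ_nonpos
  have h := hanti (Set.left_mem_Icc.2 zero_le_one) (Set.right_mem_Icc.2 zero_le_one) zero_le_one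
  norm_num [φ] at h
  linarith

theorem le_sub_of_gradient_step (hgrad : ∀ y, HasGradientAt f (f' y) y)
    (hLip : ∀ a b, ‖f' a - f' b‖ ≤ L * ‖a - b‖) (x g : E) {α : ℝ} (hα : 0 ≤ α) :
    f (x - α • g) ≤
      f x - α * (‖f' x‖ ^ 2 - ‖f' x‖ * ‖f' x - g‖) + L * α ^ 2 / 2 * ‖g‖ ^ 2 := by
  have h := le_add_inner_add_sq_of_lipschitz_gradient hgrad hLip x (-(α • g))
  rw [← sub_eq_add_neg, inner_neg_right, real_inner_smul_right, norm_neg, norm_smul,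
    Real.norm_eq_abs, mul_pow, sq_abs] at h
  have hinner : ⟪f' x, g⟫_ℝ = ‖f' x‖ ^ 2 - ⟪f' x, f' x - g⟫_ℝ := by
    rw [inner_sub_right, real_inner_self_eq_norm_sq]; ring
  nlinarith [mul_le_mul_of_nonneg_left (real_inner_le_norm (f' x) (f' x - g)) hα]

theorem aqgd_step (hgrad : ∀ y, HasGradientAt f (f' y) y)
    (hLip : ∀ a b, ‖f' a - f' b‖ ≤ L * ‖a - b‖) {x g : E} {c α μ γ R : ℝ} (hα : 0 ≤ α)
    (hαL : α * L = 1 / 6) (hγ : 9 * γ ^ 2 ≤ 1 - α * μ / 2)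
    (hPL : 2 * μ * (f x - c) ≤ ‖f' x‖ ^ 2) (herr : ‖f' x - g‖ ≤ γ * R) :
    ‖f' (x - α • g) - g‖ ≤ γ * R + α * L * ‖g‖ ∧
      f (x - α • g) - c + α * (γ * R + α * L * ‖g‖) ^ 2 ≤
        (1 - α * μ / 2) * (f x - c + α * R ^ 2) :=
  ⟨norm_gradient_sub_le_of_step hLip hα herr,
    potential_contraction_of_descent hα hαL (norm_nonneg _) (norm_nonneg _) herr
      (norm_le_insert (f' x) g) hPL
      (by linarith [le_sub_of_gradient_step hgrad hLip x g hα]) hγ⟩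

end GradientStep

theorem aqgd_convergence_general {d : ℕ} (f : EuclideanSpace ℝ (Fin d) → ℝ)
    (f' : EuclideanSpace ℝ (Fin d) → EuclideanSpace ℝ (Fin d))
    (L μ κ α γ : ℝ) (hL : 0 < L) (hκ : κ = L / μ)
    (hα : α = 1 / (6 * L)) (hγcond : 9 * γ ^ 2 ≤ 1 - 1 / (12 * κ))
    (hgrad : ∀ y, HasGradientAt f (f' y) y)
    (hLip : ∀ a b, ‖f' a - f' b‖ ≤ L * ‖a - b‖)
    (xstar : EuclideanSpace ℝ (Fin d))
    (hPL : ∀ y, 2 * μ * (f y - f xstar) ≤ ‖f' y‖ ^ 2)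
    (x g iv itld : ℕ → EuclideanSpace ℝ (Fin d)) (Rr : ℕ → ℝ)
    (hx : ∀ t, x (t + 1) = x t - α • g t)
    (hi0 : iv 0 = f' (x 0))
    (hi : ∀ t, iv (t + 1) = f' (x (t + 1)) - g t)
    (hg0 : g 0 = itld 0)
    (hg : ∀ t, g (t + 1) = g t + itld (t + 1))
    (hq : ∀ t, ‖iv t‖ ≤ Rr t → ‖iv t - itld t‖ ≤ γ * Rr t)
    (hR : ∀ t, Rr (t + 1) = γ * Rr t + α * L * ‖g t‖)
    (hR0 : ‖f' (x 0)‖ ≤ Rr 0) :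
    ∀ t, f (x t) - f xstar
      ≤ (1 - 1 / (12 * κ)) ^ t * (f (x 0) - f xstar + α * (Rr 0) ^ 2) := by
  have hα0 : 0 ≤ α := by rw [hα]; positivity
  have hαL : α * L = 1 / 6 := by rw [hα]; field_simp
  have hρ : 1 / (12 * κ) = α * μ / 2 := by rw [hκ, hα, mul_div_assoc', one_div_div]; ring
  rw [hρ] at hγcond ⊢
  have hgrad_err : ∀ t, f' (x t) - g t = iv t - itld t := by
    rintro (_ | t)
    · rw [hg0, hi0]
    · rw [hg t, hi t]; abel
  have hinvariant : ∀ t, ‖iv t‖ ≤ Rr t ∧ f (x t) - f xstar + α * Rr t ^ 2 ≤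
      (1 - α * μ / 2) ^ t * (f (x 0) - f xstar + α * Rr 0 ^ 2) := by
    intro t
    induction t with
    | zero => exact ⟨hi0 ▸ hR0, by simp⟩
    | succ t ih =>
      obtain ⟨hrange, hV⟩ := ih
      obtain ⟨hrange', hcontract⟩ := aqgd_step hgrad hLip hα0 hαL hγcond (hPL (x t))
        (hgrad_err t ▸ hq t hrange)
      rw [← hx, ← hR] at hrange' hcontract
      refine ⟨hi t ▸ hrange', hcontract.trans ?_⟩
      rw [pow_succ' (1 - α * μ / 2), mul_assoc]
      gcongr
      linarith [sq_nonneg γ]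
  intro t
  linarith [(hinvariant t).2, mul_nonneg hα0 (sq_nonneg (Rr t))]

/-- Convergence of AQGD under smoothness and gradient domination: with
`α = 1/(6L)` and `9γ² ≤ 1 - 1/(12κ)`, `κ = L/μ`, for all `t`,
`f(x_t) - f(x*) ≤ (1 - 1/(12κ))^t (f(x_0) - f(x*) + α R_0²)`. -/
theorem aqgd_convergence {d : ℕ} (f : EuclideanSpace ℝ (Fin d) → ℝ)
    (f' : EuclideanSpace ℝ (Fin d) → EuclideanSpace ℝ (Fin d))
    (L μ κ α γ : ℝ) (hL : 0 < L) (hμ : 0 < μ) (hκ : κ = L / μ)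
    (hα : α = 1 / (6 * L)) (hγ0 : 0 < γ) (hγcond : 9 * γ ^ 2 ≤ 1 - 1 / (12 * κ))
    (hgrad : ∀ y, HasGradientAt f (f' y) y)
    (hLip : ∀ a b, ‖f' a - f' b‖ ≤ L * ‖a - b‖)
    (xstar : EuclideanSpace ℝ (Fin d)) (hmin : ∀ y, f xstar ≤ f y)
    (hPL : ∀ y, 2 * μ * (f y - f xstar) ≤ ‖f' y‖ ^ 2)
    (x g iv itld : ℕ → EuclideanSpace ℝ (Fin d)) (Rr : ℕ → ℝ)
    (hx : ∀ t, x (t + 1) = x t - α • g t)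
    (hi0 : iv 0 = f' (x 0))
    (hi : ∀ t, iv (t + 1) = f' (x (t + 1)) - g t)
    (hg0 : g 0 = itld 0)
    (hg : ∀ t, g (t + 1) = g t + itld (t + 1))
    (hq : ∀ t, ‖iv t‖ ≤ Rr t → ‖iv t - itld t‖ ≤ γ * Rr t)
    (hR : ∀ t, Rr (t + 1) = γ * Rr t + α * L * ‖g t‖)
    (hR0 : ‖f' (x 0)‖ ≤ Rr 0) :
    ∀ t, f (x t) - f xstar
      ≤ (1 - 1 / (12 * κ)) ^ t * (f (x 0) - f xstar + α * (Rr 0) ^ 2) :=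
  aqgd_convergence_general f f' L μ κ α γ hL hκ hα hγcond hgrad hLip xstar hPL x g iv itld Rr hx hi0
    hi hg0 hg hq hR hR0
end
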